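/- For even n ≥ 4, every edge of the cocktail party graph K_n minus a perfect matching has edge betweenness centrality 2 + 4/(n−2); hence this graph is edge-betweenness-uniform. -/

import Mathlib

/-!
Vertices in different classes are adjacent, so between them the edge itself is the unique
shortest path; every edge therefore collects 2 from its own two ordered endpoints. The only
other pairs of distinct vertices are a vertex and its partner: they are at distance 2, the
`2m - 2` vertices outside their class being the midpoints. A shortest path between partners
uses the edge `s(u, w)` only if one endpoint lies in the class of `u` or of `w`, and then the
midpoint is forced; the four such ordered pairs contribute `1 / (2m - 2)` each.
-/

open SimpleGraph Finset

/-- The number of shortest paths between `x` and `y` in `G`. -/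
noncomputable def numShortestPaths {V : Type*} (G : SimpleGraph V) (x y : V) : ℕ :=
  Nat.card {p : G.Walk x y // p.length = G.dist x y}

/-- The number of shortest paths between `x` and `y` in `G` that contain the edge `e`. -/
noncomputable def numShortestPathsThru {V : Type*} (G : SimpleGraph V) (x y : V)
    (e : Sym2 V) : ℕ :=
  Nat.card {p : G.Walk x y // p.length = G.dist x y ∧ e ∈ p.edges}

open Classical in
/-- The edge betweenness centrality of `e`: the sum over ordered pairs of distinct
vertices `(x, y)` of the fraction of shortest `x`-`y` paths containing `e`. -/
noncomputable def edgeBetweenness {V : Type*} [Fintype V] (G : SimpleGraph V)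
    (e : Sym2 V) : ℚ :=
  ∑ x : V, ∑ y : V, if x = y then 0 else
    (numShortestPathsThru G x y e : ℚ) / (numShortestPaths G x y)

/-- The complete graph on `2 * m` vertices minus a perfect matching: vertices are
pairs `(a, i) : Fin m × Bool`, with `(a, i)` and `(b, j)` adjacent iff `a ≠ b`
(so the matched partner of `(a, i)` is `(a, !i)`). -/
def cocktailPartyGraph (m : ℕ) : SimpleGraph (Fin m × Bool) where
  Adj p q := p.1 ≠ q.1
  symm := ⟨fun _ _ h => Ne.symm h⟩
  loopless := ⟨fun _ h => h rfl⟩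

namespace SimpleGraph

variable {V : Type*} {G : SimpleGraph V} {x y : V}

lemma dist_eq_two_of_mem_commonNeighbors (hne : x ≠ y) (hxy : ¬G.Adj x y) {v : V}
    (hv : v ∈ G.commonNeighbors x y) : G.dist x y = 2 := by
  rw [dist, edist_eq_two_iff.mpr ⟨hne, hxy, v, hv⟩]
  rfl

lemma Walk.eq_toWalk_iff_length_eq_one (h : G.Adj x y) (p : G.Walk x y) :
    p = h.toWalk ↔ p.length = 1 :=
  ⟨by rintro rfl; simp, fun hp => eq_of_length_le_one hp.le (by simp)⟩

end SimpleGraph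

section ShortestPaths

variable {V : Type*} {G : SimpleGraph V} {x y : V}

lemma numShortestPaths_of_adj (h : G.Adj x y) : numShortestPaths G x y = 1 := by
  rw [numShortestPaths, dist_eq_one_iff_adj.mpr h, Nat.card_eq_one_iff_exists]
  exact ⟨⟨h.toWalk, by simp⟩,
    fun p => Subtype.ext ((Walk.eq_toWalk_iff_length_eq_one h p).2 p.2)⟩

lemma numShortestPathsThru_of_adj [DecidableEq V] (h : G.Adj x y) (e : Sym2 V) :
    numShortestPathsThru G x y e = if e = s(x, y) then 1 else 0 := by
  rw [numShortestPathsThru, dist_eq_one_iff_adj.mpr h]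
  simp_rw [← Walk.eq_toWalk_iff_length_eq_one h]
  split_ifs with he
  · rw [Nat.card_eq_one_iff_exists]
    exact ⟨⟨h.toWalk, rfl, by simp [he]⟩, fun p => Subtype.ext p.2.1⟩
  · rw [Nat.card_eq_zero]
    left
    constructor
    rintro ⟨p, rfl, hp⟩
    simp [he] at hp

lemma numShortestPaths_of_dist_eq_two (h : G.dist x y = 2) :
    numShortestPaths G x y = Nat.card (G.commonNeighbors x y) := by
  rw [numShortestPaths, h]
  exact Nat.card_congr (G.walkLengthTwoEquivCommonNeighbors x y)

lemma numShortestPathsThru_of_dist_eq_two (h : G.dist x y = 2) (e : Sym2 V) :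
    numShortestPathsThru G x y e =
      Nat.card {v : G.commonNeighbors x y // e = s(x, v) ∨ e = s(v.1, y)} := by
  rw [numShortestPathsThru, h]
  refine Nat.card_congr ((Equiv.subtypeSubtypeEquivSubtypeInter _ _).symm.trans
    (Equiv.subtypeEquiv (G.walkLengthTwoEquivCommonNeighbors x y) ?_))
  rintro ⟨p, hp⟩
  match p, hp with
  | .cons _ (.cons _ .nil), _ => simp

end ShortestPaths

section Betweenness

variable {V : Type*} [Fintype V] {G : SimpleGraph V}

lemma sum_sum_ite_sym2_eq_two {R : Type*} [AddCommMonoidWithOne R] [DecidableEq V] {u w : V}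
    (h : u ≠ w) : ∑ x : V, ∑ y : V, (if s(x, y) = s(u, w) then (1 : R) else 0) = 2 := by
  rw [← Fintype.sum_prod_type', Finset.sum_boole]
  have : ({p : V × V | s(p.1, p.2) = s(u, w)} : Finset (V × V)) = {(u, w), (w, u)} := by
    ext ⟨x, y⟩
    simp
  rw [this, card_pair (by simp [h])]
  norm_num

open Classical in
lemma edgeBetweenness_eq_two_add {u w : V} (h : G.Adj u w) :
    edgeBetweenness G s(u, w) = 2 + ∑ x : V, ∑ y : V,
      if x = y ∨ G.Adj x y then 0
      else (numShortestPathsThru G x y s(u, w) : ℚ) / numShortestPaths G x y := by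
  rw [← sum_sum_ite_sym2_eq_two h.ne, ← sum_add_distrib, edgeBetweenness]
  refine sum_congr rfl fun x _ => ?_
  rw [← sum_add_distrib]
  refine sum_congr rfl fun y _ => ?_
  by_cases hadj : G.Adj x y
  · simp [hadj.ne, hadj, numShortestPaths_of_adj, numShortestPathsThru_of_adj, eq_comm]
  · have : s(x, y) ≠ s(u, w) := fun he => hadj (by rwa [← mem_edgeSet, he])
    simp [hadj, this]

end Betweenness

lemma card_filter_fst_eq_or_fst_eq {α β : Type*} [Fintype α] [DecidableEq α] [Fintype β]
    {a b : α} (hab : a ≠ b) :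
    #({x | x.1 = a ∨ x.1 = b} : Finset (α × β)) = 2 * Fintype.card β := by
  have : ({x | x.1 = a ∨ x.1 = b} : Finset (α × β)) = {a, b} ×ˢ univ := by
    ext x
    simp
  rw [this, card_product, card_pair hab, card_univ]

namespace cocktailPartyGraph

variable {m : ℕ}

def partner (p : Fin m × Bool) : Fin m × Bool := (p.1, !p.2)

@[simp] lemma adj_iff {p q : Fin m × Bool} : (cocktailPartyGraph m).Adj p q ↔ p.1 ≠ q.1 :=
  Iff.rfl

lemma fst_eq_fst_iff {p q : Fin m × Bool} : q.1 = p.1 ↔ q = p ∨ q = partner p := by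
  obtain ⟨a, i⟩ := p; obtain ⟨b, j⟩ := q
  cases i <;> cases j <;> simp [partner]

lemma not_eq_or_adj_iff {p q : Fin m × Bool} :
    ¬(p = q ∨ (cocktailPartyGraph m).Adj p q) ↔ q = partner p := by
  obtain ⟨a, i⟩ := p; obtain ⟨b, j⟩ := q
  cases i <;> cases j <;> simp [partner, eq_comm]

lemma commonNeighbors_partner (p : Fin m × Bool) :
    (cocktailPartyGraph m).commonNeighbors p (partner p) = {v | v.1 ≠ p.1} := by
  ext v; simp [partner, mem_commonNeighbors, ne_comm]

lemma partner_ne (p : Fin m × Bool) : partner p ≠ p := by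
  simp [partner, Prod.ext_iff]

lemma card_commonNeighbors_partner (p : Fin m × Bool) :
    Nat.card ((cocktailPartyGraph m).commonNeighbors p (partner p)) = 2 * m - 2 := by
  have hfiber : ({q | q.1 = p.1} : Finset (Fin m × Bool)) = {p, partner p} := by
    ext q
    simp [fst_eq_fst_iff]
  rw [commonNeighbors_partner, Nat.card_eq_fintype_card, Fintype.card_subtype]
  simp only [Set.mem_ofPred_eq, ne_eq]
  rw [filter_not, card_sdiff_of_subset (filter_subset _ _), hfiber, card_pair (partner_ne p).symm]
  simp [mul_comm]

lemma dist_partner (hm : 2 ≤ m) (p : Fin m × Bool) :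
    (cocktailPartyGraph m).dist p (partner p) = 2 := by
  have : Nontrivial (Fin m) := Fin.nontrivial_iff_two_le.mpr hm
  obtain ⟨d, hd⟩ := exists_ne p.1
  refine dist_eq_two_of_mem_commonNeighbors (v := (d, true)) ?_ ?_ ?_ <;>
    simp [partner, mem_commonNeighbors, Prod.ext_iff, hd.symm]

lemma numShortestPaths_partner (hm : 2 ≤ m) (p : Fin m × Bool) :
    numShortestPaths (cocktailPartyGraph m) p (partner p) = 2 * m - 2 := by
  rw [numShortestPaths_of_dist_eq_two (dist_partner hm p), card_commonNeighbors_partner]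

lemma mk_eq_or_mk_partner_eq_iff (u w p v : Fin m × Bool) :
    s(u, w) = s(p, v) ∨ s(u, w) = s(v, partner p) ↔
      (u.1 = p.1 ∧ w = v) ∨ (w.1 = p.1 ∧ u = v) := by
  simp only [Sym2.eq_iff, fst_eq_fst_iff]
  tauto

lemma numShortestPathsThru_partner (hm : 2 ≤ m) {u w : Fin m × Bool} (huw : u.1 ≠ w.1)
    (p : Fin m × Bool) :
    numShortestPathsThru (cocktailPartyGraph m) p (partner p) s(u, w) =
      if p.1 = u.1 ∨ p.1 = w.1 then 1 else 0 := by
  rw [numShortestPathsThru_of_dist_eq_two (dist_partner hm p)]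
  simp_rw [mk_eq_or_mk_partner_eq_iff]
  by_cases hu : p.1 = u.1
  · have hw : p.1 ≠ w.1 := hu ▸ huw
    rw [if_pos (Or.inl hu), Nat.card_eq_one_iff_exists]
    refine ⟨⟨⟨w, by simp [commonNeighbors_partner, hw.symm]⟩, by simp [hu]⟩, ?_⟩
    rintro ⟨v, hv⟩
    grind
  by_cases hw : p.1 = w.1
  · rw [if_pos (Or.inr hw), Nat.card_eq_one_iff_exists]
    refine ⟨⟨⟨u, by simp [commonNeighbors_partner, hw ▸ huw]⟩, by simp [hw]⟩, ?_⟩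
    rintro ⟨v, hv⟩
    grind
  · rw [if_neg (by tauto), Nat.card_eq_zero]
    left
    constructor
    rintro ⟨v, hv⟩
    grind

lemma edgeBetweenness_mk (hm : 2 ≤ m) {u w : Fin m × Bool}
    (huw : (cocktailPartyGraph m).Adj u w) :
    edgeBetweenness (cocktailPartyGraph m) s(u, w) = 2 + 4 / ((2 * m : ℚ) - 2) := by
  have hcast : ((2 * m - 2 : ℕ) : ℚ) = 2 * m - 2 := by
    rw [Nat.cast_sub (by omega)]
    push_cast
    ring
  rw [edgeBetweenness_eq_two_add huw]
  congr 1
  calc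
    _ = ∑ x, (numShortestPathsThru (cocktailPartyGraph m) x (partner x) s(u, w) : ℚ) /
          numShortestPaths (cocktailPartyGraph m) x (partner x) := by
      refine sum_congr rfl fun x _ => ?_
      exact (Fintype.sum_eq_single (partner x)
        fun y hy => if_pos (not_not.1 (mt not_eq_or_adj_iff.1 hy))).trans
        (if_neg (not_eq_or_adj_iff.2 rfl))
    _ = ∑ x : Fin m × Bool, if x.1 = u.1 ∨ x.1 = w.1 then 1 / ((2 * m : ℚ) - 2) else 0 := by
      refine sum_congr rfl fun x _ => ?_
      rw [numShortestPathsThru_partner hm huw, numShortestPaths_partner hm, hcast]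
      split_ifs <;> simp
    _ = 4 / ((2 * m : ℚ) - 2) := by
      rw [sum_ite, sum_const_zero, add_zero, sum_const, card_filter_fst_eq_or_fst_eq huw]
      simp [div_eq_mul_inv]

end cocktailPartyGraph

theorem stmt4 (m : ℕ) (hm : 2 ≤ m) :
    (∀ e ∈ (cocktailPartyGraph m).edgeSet,
      edgeBetweenness (cocktailPartyGraph m) e = 2 + 4 / ((2 * m : ℚ) - 2)) ∧
    (∀ e₁ ∈ (cocktailPartyGraph m).edgeSet, ∀ e₂ ∈ (cocktailPartyGraph m).edgeSet,
      edgeBetweenness (cocktailPartyGraph m) e₁ =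
        edgeBetweenness (cocktailPartyGraph m) e₂) := by
  have h : ∀ e ∈ (cocktailPartyGraph m).edgeSet,
      edgeBetweenness (cocktailPartyGraph m) e = 2 + 4 / ((2 * m : ℚ) - 2) := by
    intro e he
    induction e using Sym2.ind with
    | _ u w => exact cocktailPartyGraph.edgeBetweenness_mk hm he
  exact ⟨h, fun e₁ h₁ e₂ h₂ => by rw [h e₁ h₁, h e₂ h₂]⟩
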